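/- Let (α, T, s) be real matrix-exponential parameters with sign decompositions T = T⁺ − T⁻, s = s⁺ − s⁻, α = w⁺α⁺ − w⁻α⁻ as above, and let λ ≥ 0 with α(λI−T)^{-1}s ≠ 0. Set α̂⁺ = (w⁺/(w⁺+w⁻)) α⁺ and α̂⁻ = (w⁻/(w⁺+w⁻)) α⁻ (assuming w⁺ + w⁻ > 0). Then the tilted density f_λ(x) = (α(λI−T)^{-1}s)^{-1} α e^{(T−λI)x} s satisfies f_λ(x) = ((w⁺+w⁻)/(α(λI−T)^{-1}s)) · (α̂⁺, α̂⁻) exp([[T⁺−λI, T⁻],[T⁻, T⁺−λI]] x) [s; −s] for all x ≥ 0. -/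

import Mathlib

/-!
Write `P = Tp - λ I`, so that the block generator is `fromBlocks P Tm Tm P` and `P - Tm = T - λ I`.
With `C = [I; -I]` one has `fromBlocks P Q Q P * C = C * (P - Q)`; this intertwining passes to the
exponential series, so the block exponential sends `[s; -s]` to `[v; -v]` with
`v = exp (x (T - λ I)) s`. Pairing with `(α̂⁺, α̂⁻)` gives `(α̂⁺ - α̂⁻) ⬝ᵥ v`, and
`(w⁺ + w⁻)(α̂⁺ - α̂⁻) = w⁺ α⁺ - w⁻ α⁻ = α`.
-/

open scoped Matrix

open NormedSpace

namespace Matrix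

variable {m n : Type*} [Fintype m] [DecidableEq m] [Fintype n] [DecidableEq n]

theorem pow_mul_of_mul_eq_mul {R : Type*} [Semiring R] {A : Matrix m m R} {B : Matrix n n R}
    {C : Matrix m n R} (h : A * C = C * B) (k : ℕ) : A ^ k * C = C * B ^ k := by
  induction k with
  | zero => simp
  | succ k ih => rw [pow_succ', Matrix.mul_assoc, ih, ← Matrix.mul_assoc, h, Matrix.mul_assoc,
      ← pow_succ']

variable {𝕂 : Type*} [RCLike 𝕂]

open scoped Norms.Operator in
theorem exp_mul_of_mul_eq_mul {A : Matrix m m 𝕂} {B : Matrix n n 𝕂} {C : Matrix m n 𝕂}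
    (h : A * C = C * B) : exp A * C = C * exp B := by
  have hA := (exp_series_hasSum_exp' (𝕂 := 𝕂) A).map (mulRightLinearMap m 𝕂 C)
    (continuous_id.matrix_mul continuous_const)
  have hB := (exp_series_hasSum_exp' (𝕂 := 𝕂) B).map (mulLeftLinearMap n 𝕂 C)
    (continuous_const.matrix_mul continuous_id)
  refine hA.unique (hB.congr_fun fun k => ?_)
  simp [pow_mul_of_mul_eq_mul h]

theorem exp_fromBlocks_mulVec_sumElim_neg (P Q : Matrix n n 𝕂) (v : n → 𝕂) :
    exp (fromBlocks P Q Q P) *ᵥ Sum.elim v (-v) =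
      Sum.elim (exp (P - Q) *ᵥ v) (-(exp (P - Q) *ᵥ v)) := by
  have hC : fromBlocks P Q Q P * (fromRows 1 (-1) : Matrix (n ⊕ n) n 𝕂) =
      (fromRows 1 (-1) : Matrix (n ⊕ n) n 𝕂) * (P - Q) := by
    rw [fromBlocks_mul_fromRows, fromRows_mul]
    congr 1 <;> noncomm_ring
  have hv : Sum.elim v (-v) = fromRows (1 : Matrix n n 𝕂) (-1) *ᵥ v := by simp [Matrix.neg_mulVec]
  rw [hv, mulVec_mulVec, exp_mul_of_mul_eq_mul hC, ← mulVec_mulVec, fromRows_mulVec]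
  simp [Matrix.neg_mulVec]

end Matrix

theorem sum_mul_ite_div_sum {ι K : Type*} [Fintype ι] [Field K] [LinearOrder K]
    [IsStrictOrderedRing K] {f : ι → K} (hf : ∀ i, 0 ≤ f i) (i : ι) :
    (∑ j, f j) * (if 0 < ∑ j, f j then f i / ∑ j, f j else 0) = f i := by
  split_ifs with h
  · exact mul_div_cancel₀ _ h.ne'
  · have hzero := (Finset.sum_eq_zero_iff_of_nonneg fun j _ => hf j).1
      (le_antisymm (not_lt.1 h) (Finset.sum_nonneg fun j _ => hf j))
    rw [mul_zero, hzero i (Finset.mem_univ i)]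

theorem eq_smul_sub_smul_of_normalized_parts {ι : Type*} [Fintype ι] {α αp αm : ι → ℝ}
    {wp wm : ℝ} (hwp : wp = ∑ i, max 0 (α i)) (hwm : wm = ∑ i, max 0 (-(α i)))
    (hαp : ∀ i, αp i = if 0 < wp then max 0 (α i) / wp else 0)
    (hαm : ∀ i, αm i = if 0 < wm then max 0 (-(α i)) / wm else 0) :
    α = wp • αp - wm • αm := by
  ext i
  have hp := sum_mul_ite_div_sum (fun j => le_max_left 0 (α j)) i
  have hm := sum_mul_ite_div_sum (fun j => le_max_left 0 (-(α j))) i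
  rw [← hwp, ← hαp] at hp
  rw [← hwm, ← hαm] at hm
  rw [Pi.sub_apply, Pi.smul_apply, Pi.smul_apply, smul_eq_mul, smul_eq_mul, hp, hm, max_comm 0,
    max_comm 0, max_zero_sub_eq_self]

theorem stmt10_general (p : ℕ) (T Tp Tm : Matrix (Fin p) (Fin p) ℝ) (α s : Fin p → ℝ)
    (hTdec : T = Tp - Tm)
    (wp wm : ℝ) (hwp : wp = ∑ i, max 0 (α i)) (hwm : wm = ∑ i, max 0 (-(α i)))
    (hw : 0 < wp + wm)
    (αp αm : Fin p → ℝ)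
    (hαp : ∀ i, αp i = if 0 < wp then max 0 (α i) / wp else 0)
    (hαm : ∀ i, αm i = if 0 < wm then max 0 (-(α i)) / wm else 0)
    (lam : ℝ)
    (αhp αhm : Fin p → ℝ)
    (hαhp : αhp = (wp / (wp + wm)) • αp) (hαhm : αhm = (wm / (wp + wm)) • αm)
    (flam : ℝ → ℝ)
    (hflam : ∀ x, flam x = (α ⬝ᵥ (lam • (1 : Matrix (Fin p) (Fin p) ℝ) - T)⁻¹.mulVec s)⁻¹
      * (α ⬝ᵥ (NormedSpace.exp
          (x • (T - lam • (1 : Matrix (Fin p) (Fin p) ℝ)))).mulVec s)) :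
    ∀ x : ℝ, 0 ≤ x →
      flam x = ((wp + wm) / (α ⬝ᵥ (lam • (1 : Matrix (Fin p) (Fin p) ℝ) - T)⁻¹.mulVec s))
        * ((Sum.elim αhp αhm) ⬝ᵥ
            (NormedSpace.exp (x • Matrix.fromBlocks
                (Tp - lam • (1 : Matrix (Fin p) (Fin p) ℝ)) Tm
                Tm (Tp - lam • (1 : Matrix (Fin p) (Fin p) ℝ)))).mulVec (Sum.elim s (-s))) := by
  intro x _
  have hα : α = (wp + wm) • (αhp - αhm) := by
    rw [eq_smul_sub_smul_of_normalized_parts hwp hwm hαp hαm, hαhp, hαhm, smul_sub, smul_smul,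
      smul_smul, mul_div_cancel₀ _ hw.ne', mul_div_cancel₀ _ hw.ne']
  have hgen : x • (Tp - lam • 1) - x • Tm = x • (T - lam • (1 : Matrix (Fin p) (Fin p) ℝ)) := by
    rw [hTdec, ← smul_sub, sub_right_comm]
  have hdot (u : Fin p → ℝ) : α ⬝ᵥ u = (wp + wm) * ((αhp - αhm) ⬝ᵥ u) := by
    rw [hα, smul_dotProduct, smul_eq_mul]
  rw [hflam x, Matrix.fromBlocks_smul, Matrix.exp_fromBlocks_mulVec_sumElim_neg, hgen,
    sumElim_dotProduct_sumElim, dotProduct_neg, ← sub_eq_add_neg, ← sub_dotProduct,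
    div_eq_mul_inv, mul_comm (wp + wm), mul_assoc, ← hdot]

/-- Theorem 2 (eq. (10)): the tilted density f_λ equals
((w⁺+w⁻)/(α(λI−T)⁻¹s)) (α̂⁺,α̂⁻) e^{Gx} [s;−s]. -/
theorem stmt10 (p : ℕ) (T Tp Tm : Matrix (Fin p) (Fin p) ℝ) (α s sp sm : Fin p → ℝ)
    (hTdec : T = Tp - Tm)
    (hTpOff : ∀ i j, i ≠ j → 0 ≤ Tp i j) (hTpDiag : ∀ i, Tp i i ≤ 0)
    (hTm : ∀ i j, 0 ≤ Tm i j)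
    (hsdec : s = sp - sm) (hsp : ∀ i, 0 ≤ sp i) (hsm : ∀ i, 0 ≤ sm i)
    (wp wm : ℝ) (hwp : wp = ∑ i, max 0 (α i)) (hwm : wm = ∑ i, max 0 (-(α i)))
    (hw : 0 < wp + wm)
    (αp αm : Fin p → ℝ)
    (hαp : ∀ i, αp i = if 0 < wp then max 0 (α i) / wp else 0)
    (hαm : ∀ i, αm i = if 0 < wm then max 0 (-(α i)) / wm else 0)
    (lam : ℝ) (hlam : 0 ≤ lam)
    (hZ : α ⬝ᵥ (lam • (1 : Matrix (Fin p) (Fin p) ℝ) - T)⁻¹.mulVec s ≠ 0)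
    (αhp αhm : Fin p → ℝ)
    (hαhp : αhp = (wp / (wp + wm)) • αp) (hαhm : αhm = (wm / (wp + wm)) • αm)
    (flam : ℝ → ℝ)
    (hflam : ∀ x, flam x = (α ⬝ᵥ (lam • (1 : Matrix (Fin p) (Fin p) ℝ) - T)⁻¹.mulVec s)⁻¹
      * (α ⬝ᵥ (NormedSpace.exp
          (x • (T - lam • (1 : Matrix (Fin p) (Fin p) ℝ)))).mulVec s)) :
    ∀ x : ℝ, 0 ≤ x →
      flam x = ((wp + wm) / (α ⬝ᵥ (lam • (1 : Matrix (Fin p) (Fin p) ℝ) - T)⁻¹.mulVec s))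
        * ((Sum.elim αhp αhm) ⬝ᵥ
            (NormedSpace.exp (x • Matrix.fromBlocks
                (Tp - lam • (1 : Matrix (Fin p) (Fin p) ℝ)) Tm
                Tm (Tp - lam • (1 : Matrix (Fin p) (Fin p) ℝ)))).mulVec (Sum.elim s (-s))) :=
  stmt10_general p T Tp Tm α s hTdec wp wm hwp hwm hw αp αm hαp hαm lam αhp αhm hαhp hαhm flam hflam
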